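/- Let G be a finite connected locally connected graph of diameter two, let x be a vertex and let u be a neighbor of x. Then the class [u]_x = {w ≠ x : line(x,w) = line(x,u)} is an independent set (no two of its vertices are adjacent) and is a module of G, i.e., every vertex z ∉ [u]_x is adjacent either to all vertices of [u]_x or to none of them. -/

import Mathlib

open SimpleGraph

/-- The line defined by two vertices `a` and `b` of a graph: `{a, b}` together with all
vertices `c` lying on a shortest path through `a`, `b` and `c` (in some order). -/
def SimpleGraph.line {V : Type*} (G : SimpleGraph V) (a b : V) : Set V :=
  {a, b} ∪ {c | G.dist a b = G.dist a c + G.dist c b ∨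
                G.dist a c = G.dist a b + G.dist b c ∨
                G.dist b c = G.dist b a + G.dist a c}

/-- The set of all lines of a graph. -/
def SimpleGraph.lineSet {V : Type*} (G : SimpleGraph V) : Set (Set V) :=
  {s | ∃ a b : V, a ≠ b ∧ s = G.line a b}

/-- A graph is locally connected if the subgraph induced on each neighborhood is connected. -/
def SimpleGraph.LocallyConnected {V : Type*} (G : SimpleGraph V) : Prop :=
  ∀ v : V, (G.induce (G.neighborSet v)).Connected

/-- The class `[u]_z`: all vertices `w ≠ z` defining the same line with `z` as `u` does. -/
def SimpleGraph.lineClass {V : Type*} (G : SimpleGraph V) (z u : V) : Set V :=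
  {w | w ≠ z ∧ G.line z w = G.line z u}

/-!
In a connected graph of diameter two, the line of an adjacent pair `x, u` consists of the
vertices adjacent to exactly one of `x` and `u`, while the line of a non-adjacent pair `x, w`
consists of `x`, `w` and their common neighbours. Local connectivity forces every `w ∈ [u]_x` to
be adjacent to `x`. Then `line(x,w) = line(x,u)` says that `w` and `u` have the same
neighbourhood, and a set of vertices sharing one open neighbourhood is independent and a module.
-/

namespace SimpleGraph

variable {V : Type*} {G : SimpleGraph V}

lemma mem_line_iff {a b c : V} : c ∈ G.line a b ↔ c = a ∨ c = b ∨
    G.dist a b = G.dist a c + G.dist c b ∨ G.dist a c = G.dist a b + G.dist b c ∨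
      G.dist b c = G.dist b a + G.dist a c := by
  simp [line, or_assoc]

lemma LocallyConnected.exists_adj_adj (hlc : G.LocallyConnected) {u v w : V}
    (hv : G.Adj u v) (hw : G.Adj u w) (hvw : v ≠ w) : ∃ c, G.Adj u c ∧ G.Adj v c := by
  obtain ⟨p⟩ := (hlc u).preconnected ⟨v, hv⟩ ⟨w, hw⟩
  have hp : ¬ p.Nil := Walk.not_nil_of_ne fun h => hvw (congrArg Subtype.val h)
  exact ⟨p.snd, p.snd.2, p.adj_snd hp⟩

open Classical in
lemma dist_eq_ite_adj (hG : G.Connected) (hle : ∀ a b : V, G.dist a b ≤ 2) {a b : V}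
    (hab : a ≠ b) : G.dist a b = if G.Adj a b then 1 else 2 := by
  split_ifs with h
  · exact dist_eq_one_iff_adj.mpr h
  · have := hG.pos_dist_of_ne hab
    have := hle a b
    have : G.dist a b ≠ 1 := mt dist_eq_one_iff_adj.mp h
    omega

lemma mem_line_iff_of_adj (hG : G.Connected) (hle : ∀ a b : V, G.dist a b ≤ 2) {x u : V}
    (hxu : G.Adj x u) (c : V) : c ∈ G.line x u ↔ (G.Adj x c ↔ ¬ G.Adj u c) := by
  rcases eq_or_ne c x with rfl | hcx
  · simp [mem_line_iff, hxu.symm]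
  rcases eq_or_ne c u with rfl | hcu
  · simp [mem_line_iff, hxu]
  rw [mem_line_iff, dist_comm (u := c), dist_comm (u := u) (v := x),
    dist_eq_ite_adj hG hle hxu.ne, dist_eq_ite_adj hG hle hcx.symm,
    dist_eq_ite_adj hG hle hcu.symm, if_pos hxu]
  split_ifs <;> simp_all

lemma mem_line_iff_of_not_adj (hG : G.Connected) (hle : ∀ a b : V, G.dist a b ≤ 2) {x w : V}
    (hxw : x ≠ w) (hnadj : ¬ G.Adj x w) (c : V) :
    c ∈ G.line x w ↔ c = x ∨ c = w ∨ (G.Adj x c ∧ G.Adj w c) := by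
  rcases eq_or_ne c x with rfl | hcx
  · simp [mem_line_iff]
  rcases eq_or_ne c w with rfl | hcw
  · simp [mem_line_iff]
  rw [mem_line_iff, dist_comm (u := c), dist_comm (u := w) (v := x),
    dist_eq_ite_adj hG hle hxw, dist_eq_ite_adj hG hle hcx.symm,
    dist_eq_ite_adj hG hle hcw.symm, if_neg hnadj]
  split_ifs <;> simp_all

lemma adj_of_mem_lineClass (hG : G.Connected) (hlc : G.LocallyConnected)
    (hle : ∀ a b : V, G.dist a b ≤ 2) {x u w : V} (hxu : G.Adj x u)
    (hw : w ∈ G.lineClass x u) : G.Adj x w := by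
  obtain ⟨hwx, hline⟩ := hw
  by_contra hxw
  have huw : G.Adj u w := by
    have hw_mem : w ∈ G.line x u := hline ▸ by simp [mem_line_iff]
    simpa [hxw] using (mem_line_iff_of_adj hG hle hxu w).mp hw_mem
  obtain ⟨c, huc, hwc⟩ := hlc.exists_adj_adj huw hxu.symm hwx
  have h₁ := mem_line_iff_of_adj hG hle hxu c
  have h₂ := mem_line_iff_of_not_adj hG hle hwx.symm hxw c
  rw [hline] at h₂
  -- `c` lies on `line x u` iff `¬ G.Adj x c`, but on `line x w` iff `G.Adj x c`.
  have hcx : c ≠ x := fun h => hxw (h ▸ hwc).symm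
  simp only [huc, not_true_eq_false, iff_false, hcx, hwc.ne.symm, hwc, and_true,
    false_or] at h₁ h₂
  tauto

lemma adj_iff_adj_of_mem_lineClass (hG : G.Connected) (hlc : G.LocallyConnected)
    (hle : ∀ a b : V, G.dist a b ≤ 2) {x u w : V} (hxu : G.Adj x u)
    (hw : w ∈ G.lineClass x u) (c : V) : G.Adj w c ↔ G.Adj u c := by
  have h := mem_line_iff_of_adj hG hle (adj_of_mem_lineClass hG hlc hle hxu hw) c
  rw [hw.2, mem_line_iff_of_adj hG hle hxu] at h
  tauto

end SimpleGraph

theorem lineClass_independent_module_general {V : Type*} (G : SimpleGraph V)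
    (hG : G.Connected) (hlc : G.LocallyConnected) (hdiam : G.diam = 2)
    {x u : V} (hu : G.Adj x u) :
    (∀ a ∈ G.lineClass x u, ∀ b ∈ G.lineClass x u, ¬ G.Adj a b) ∧
    (∀ z ∉ G.lineClass x u,
      (∀ w ∈ G.lineClass x u, G.Adj z w) ∨ (∀ w ∈ G.lineClass x u, ¬ G.Adj z w)) := by
  have hle : ∀ a b : V, G.dist a b ≤ 2 :=
    fun a b => hdiam ▸ dist_le_diam (ediam_ne_top_of_diam_ne_zero (by omega))
  have twin : ∀ w ∈ G.lineClass x u, ∀ c, G.Adj w c ↔ G.Adj u c :=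
    fun w hw => adj_iff_adj_of_mem_lineClass hG hlc hle hu hw
  refine ⟨fun a ha b hb hab => ?_, fun z _ => ?_⟩
  · exact G.loopless.irrefl u ((twin b hb u).mp ((twin a ha b).mp hab).symm)
  · by_cases h : ∃ w ∈ G.lineClass x u, G.Adj z w
    · obtain ⟨w₀, hw₀, hzw₀⟩ := h
      exact .inl fun w hw => ((twin w hw z).mpr ((twin w₀ hw₀ z).mp hzw₀.symm)).symm
    · exact .inr fun w hw hzw => h ⟨w, hw, hzw⟩

theorem lineClass_independent_module {V : Type*} [Fintype V] (G : SimpleGraph V)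
    (hG : G.Connected) (hlc : G.LocallyConnected) (hdiam : G.diam = 2)
    {x u : V} (hu : G.Adj x u) :
    (∀ a ∈ G.lineClass x u, ∀ b ∈ G.lineClass x u, ¬ G.Adj a b) ∧
    (∀ z ∉ G.lineClass x u,
      (∀ w ∈ G.lineClass x u, G.Adj z w) ∨ (∀ w ∈ G.lineClass x u, ¬ G.Adj z w)) :=
  lineClass_independent_module_general G hG hlc hdiam hu
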